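/- arXiv:1609.08607 — 2 statements merged into one kernel-verified Lean document; each statement's English description precedes it below -/
import Mathlib

section
/- Let Φ : I → ℝ be a convex function on an interval I of positive real numbers, let T, V be bounded linear invertible operators on a complex Hilbert space H, and let 0 < m < M with [m², M²] contained in the interior of I and m‖Tx‖ ≤ ‖Vx‖ ≤ M‖Tx‖ for all x ∈ H. Then for every x ∈ H with x ≠ 0 one has the Jensen-type inequality ⟨⊙_Φ(V,T)x, x⟩ / ‖Tx‖² ≥ Φ(‖Vx‖²/‖Tx‖²). -/
/-!
Put `X = |V T⁻¹|²` and `y = T x`. The hypothesis on `T, V` says `m² ≤ X ≤ M²`, so the spectrum of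
`X` lies in `[m², M²] ⊆ interior I`, and `⟪⊙_Φ(V,T) x, x⟫ = ⟪Φ(X) y, y⟫`, `⟪X y, y⟫ = ‖V x‖²`.
Hence the claim is Jensen's operator inequality `Φ(⟪X u, u⟫) ≤ ⟪Φ(X) u, u⟫` for `u = y / ‖y‖`. It
holds because a convex `Φ` lies above an affine function `t ↦ Φ l + c (t - l)` touching it at
`l = ⟪X u, u⟫`, and the continuous functional calculus preserves this inequality.
-/

variable {H : Type*} [NormedAddCommGroup H] [InnerProductSpace ℂ H] [CompleteSpace H]

/-- `X = |VT⁻¹|² = (T*)⁻¹ V* V T⁻¹`. -/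
noncomputable def qX (V T : (H →L[ℂ] H)ˣ) : H →L[ℂ] H :=
  star (↑(T⁻¹) : H →L[ℂ] H) * (star (V : H →L[ℂ] H) * (V : H →L[ℂ] H)) * (↑(T⁻¹) : H →L[ℂ] H)

/-- The quadratic operator perspective `⊙_Φ(V,T) = T* Φ(X) T`. -/
noncomputable def qPersp (Φ : ℝ → ℝ) (V T : (H →L[ℂ] H)ˣ) : H →L[ℂ] H :=
  star (T : H →L[ℂ] H) * cfc Φ (qX V T) * (T : H →L[ℂ] H)

/-- `|T|² = T*T`. -/
noncomputable def modSq (T : (H →L[ℂ] H)ˣ) : H →L[ℂ] H :=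
  star (T : H →L[ℂ] H) * (T : H →L[ℂ] H)

open Set RCLike

lemma ConvexOn.add_rightDeriv_mul_sub_le {I : Set ℝ} {Φ : ℝ → ℝ} (hΦ : ConvexOn ℝ I Φ)
    {l t : ℝ} (hl : l ∈ interior I) (ht : t ∈ I) :
    Φ l + derivWithin Φ (Ioi l) l * (t - l) ≤ Φ t := by
  rcases lt_trichotomy t l with htl | rfl | hlt
  · have hslope : slope Φ t l ≤ derivWithin Φ (Ioi l) l :=
      (hΦ.slope_le_leftDeriv_of_mem_interior ht hl htl).trans
        (hΦ.leftDeriv_le_rightDeriv_of_mem_interior hl)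
    rw [slope_def_field, div_le_iff₀ (sub_pos.2 htl)] at hslope
    linarith
  · simp
  · have hslope := hΦ.rightDeriv_le_slope_of_mem_interior hl ht hlt
    rw [slope_def_field, le_div_iff₀ (sub_pos.2 hlt)] at hslope
    linarith

namespace ContinuousLinearMap

section RCLike

variable {𝕜 E : Type*} [RCLike 𝕜] [NormedAddCommGroup E] [InnerProductSpace 𝕜 E]

lemma sub_reApplyInnerSelf (A B : E →L[𝕜] E) (x : E) :
    (A - B).reApplyInnerSelf x = A.reApplyInnerSelf x - B.reApplyInnerSelf x := by
  simp [reApplyInnerSelf_apply, inner_sub_left]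

lemma reApplyInnerSelf_mono {A B : E →L[𝕜] E} (h : A ≤ B) (x : E) :
    A.reApplyInnerSelf x ≤ B.reApplyInnerSelf x :=
  sub_nonneg.1 (sub_reApplyInnerSelf B A x ▸ ((le_def A B).1 h).2 x)

lemma units_inv_apply_apply (T : (E →L[𝕜] E)ˣ) (x : E) :
    (↑T⁻¹ : E →L[𝕜] E) ((T : E →L[𝕜] E) x) = x := by
  rw [← mul_apply_eq_comp, Units.inv_mul, one_apply_eq_self]

lemma units_apply_inv_apply (T : (E →L[𝕜] E)ˣ) (x : E) :
    (T : E →L[𝕜] E) ((↑T⁻¹ : E →L[𝕜] E) x) = x := by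
  rw [← mul_apply_eq_comp, Units.mul_inv, one_apply_eq_self]

variable [CompleteSpace E]

lemma reApplyInnerSelf_star_mul_mul (A F : E →L[𝕜] E) (x : E) :
    (star A * F * A).reApplyInnerSelf x = F.reApplyInnerSelf (A x) := by
  simp [reApplyInnerSelf_apply, star_eq_adjoint, adjoint_inner_left]

lemma reApplyInnerSelf_star_mul_self (A : E →L[𝕜] E) (x : E) :
    (star A * A).reApplyInnerSelf x = ‖A x‖ ^ 2 := by
  simp [reApplyInnerSelf_apply, star_eq_adjoint, adjoint_inner_left]

end RCLike

variable {E : Type*} [NormedAddCommGroup E] [InnerProductSpace ℂ E]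

lemma smul_reApplyInnerSelf (c : ℝ) (A : E →L[ℂ] E) (x : E) :
    (c • A).reApplyInnerSelf x = c * A.reApplyInnerSelf x := by
  rw [reApplyInnerSelf_apply, smul_apply, real_smul_eq_coe_smul (K := ℂ), inner_smul_left]
  simp [reApplyInnerSelf_apply]

lemma reApplyInnerSelf_algebraMap (r : ℝ) (x : E) :
    (algebraMap ℝ (E →L[ℂ] E) r).reApplyInnerSelf x = r * ‖x‖ ^ 2 := by
  rw [Algebra.algebraMap_eq_smul_one, smul_reApplyInnerSelf, reApplyInnerSelf_apply,
    one_apply_eq_self, inner_self_eq_norm_sq]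

variable [CompleteSpace E]

lemma algebraMap_le_of_forall_reApplyInnerSelf {A : E →L[ℂ] E} (hA : IsSelfAdjoint A) {r : ℝ}
    (h : ∀ x, r * ‖x‖ ^ 2 ≤ A.reApplyInnerSelf x) : algebraMap ℝ (E →L[ℂ] E) r ≤ A := by
  refine isPositive_def'.2 ⟨hA.sub (.algebraMap _ (.all r)), fun x => ?_⟩
  rw [sub_reApplyInnerSelf, reApplyInnerSelf_algebraMap, sub_nonneg]
  exact h x

lemma le_algebraMap_of_forall_reApplyInnerSelf {A : E →L[ℂ] E} (hA : IsSelfAdjoint A) {r : ℝ}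
    (h : ∀ x, A.reApplyInnerSelf x ≤ r * ‖x‖ ^ 2) : A ≤ algebraMap ℝ (E →L[ℂ] E) r := by
  refine isPositive_def'.2 ⟨(IsSelfAdjoint.algebraMap _ (.all r)).sub hA, fun x => ?_⟩
  rw [sub_reApplyInnerSelf, reApplyInnerSelf_algebraMap, sub_nonneg]
  exact h x

lemma spectrum_subset_Icc_of_forall_reApplyInnerSelf {A : E →L[ℂ] E} (hA : IsSelfAdjoint A)
    {a b : ℝ} (h : ∀ x, A.reApplyInnerSelf x ∈ Icc (a * ‖x‖ ^ 2) (b * ‖x‖ ^ 2)) :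
    spectrum ℝ A ⊆ Icc a b := fun t ht =>
  ⟨(algebraMap_le_iff_le_spectrum hA).1 (algebraMap_le_of_forall_reApplyInnerSelf hA
      fun x => (h x).1) t ht,
    (le_algebraMap_iff_spectrum_le hA).1 (le_algebraMap_of_forall_reApplyInnerSelf hA
      fun x => (h x).2) t ht⟩

theorem _root_.ConvexOn.mul_norm_sq_le_reApplyInnerSelf_cfc {I : Set ℝ} {Φ : ℝ → ℝ}
    (hΦ : ConvexOn ℝ I Φ) {A : E →L[ℂ] E} (hA : IsSelfAdjoint A)
    (hspec : spectrum ℝ A ⊆ interior I) {l : ℝ} (hl : l ∈ interior I) {x : E}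
    (hx : A.reApplyInnerSelf x = l * ‖x‖ ^ 2) :
    Φ l * ‖x‖ ^ 2 ≤ (cfc Φ A).reApplyInnerSelf x := by
  set c := derivWithin Φ (Ioi l) l
  have hcont : ContinuousOn Φ (spectrum ℝ A) :=
    ((hΦ.subset interior_subset hΦ.1.interior).continuousOn isOpen_interior).mono hspec
  have hminor : algebraMap ℝ (E →L[ℂ] E) (Φ l - c * l) ≤ cfc Φ A - c • A := by
    rw [← cfc_const_mul_id c A hA, ← cfc_sub Φ (c * ·) A hcont]
    refine algebraMap_le_cfc _ _ A (fun t ht => ?_) (hcont.sub (by fun_prop)) hA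
    linarith [hΦ.add_rightDeriv_mul_sub_le hl (interior_subset (hspec ht))]
  have hminor_x := reApplyInnerSelf_mono hminor x
  rw [reApplyInnerSelf_algebraMap, sub_reApplyInnerSelf, smul_reApplyInnerSelf, hx] at hminor_x
  linarith

end ContinuousLinearMap

open ContinuousLinearMap

lemma qX_reApplyInnerSelf (V T : (H →L[ℂ] H)ˣ) (x : H) :
    (qX V T).reApplyInnerSelf ((T : H →L[ℂ] H) x) = ‖(V : H →L[ℂ] H) x‖ ^ 2 := by
  rw [qX, reApplyInnerSelf_star_mul_mul, reApplyInnerSelf_star_mul_self, units_inv_apply_apply]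

lemma qX_isSelfAdjoint (V T : (H →L[ℂ] H)ˣ) : IsSelfAdjoint (qX V T) :=
  (IsSelfAdjoint.star_mul_self _).conjugate' _

lemma qPersp_reApplyInnerSelf (Φ : ℝ → ℝ) (V T : (H →L[ℂ] H)ˣ) (x : H) :
    (qPersp Φ V T).reApplyInnerSelf x = (cfc Φ (qX V T)).reApplyInnerSelf ((T : H →L[ℂ] H) x) :=
  reApplyInnerSelf_star_mul_mul _ _ x

lemma qX_reApplyInnerSelf_mem_Icc (V T : (H →L[ℂ] H)ˣ) {m M : ℝ} (hm : 0 ≤ m)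
    (hTV : ∀ x : H, m * ‖(T : H →L[ℂ] H) x‖ ≤ ‖(V : H →L[ℂ] H) x‖ ∧
      ‖(V : H →L[ℂ] H) x‖ ≤ M * ‖(T : H →L[ℂ] H) x‖) (z : H) :
    (qX V T).reApplyInnerSelf z ∈ Icc (m ^ 2 * ‖z‖ ^ 2) (M ^ 2 * ‖z‖ ^ 2) := by
  obtain ⟨x, rfl⟩ : ∃ x, (T : H →L[ℂ] H) x = z :=
    ⟨(↑T⁻¹ : H →L[ℂ] H) z, units_apply_inv_apply T z⟩
  obtain ⟨hlow, hup⟩ := hTV x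
  rw [qX_reApplyInnerSelf, ← mul_pow, ← mul_pow]
  exact ⟨pow_le_pow_left₀ (by positivity) hlow 2,
    pow_le_pow_left₀ ((mul_nonneg hm (norm_nonneg _)).trans hlow) hup 2⟩

theorem stmt4_general (I : Set ℝ)
    (Φ : ℝ → ℝ) (hΦ : ConvexOn ℝ I Φ)
    (T V : (H →L[ℂ] H)ˣ) (m M : ℝ) (hm : 0 < m)
    (hsub : Set.Icc (m ^ 2) (M ^ 2) ⊆ interior I)
    (hTV : ∀ x : H, m * ‖(T : H →L[ℂ] H) x‖ ≤ ‖(V : H →L[ℂ] H) x‖ ∧ ‖(V : H →L[ℂ] H) x‖ ≤ M * ‖(T : H →L[ℂ] H) x‖)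
    (x : H) (hx : x ≠ 0) :
    Φ (‖(V : H →L[ℂ] H) x‖ ^ 2 / ‖(T : H →L[ℂ] H) x‖ ^ 2) ≤
      (inner ℂ ((qPersp Φ V T) x) x : ℂ).re / ‖(T : H →L[ℂ] H) x‖ ^ 2 := by
  have hTx : 0 < ‖(T : H →L[ℂ] H) x‖ ^ 2 := by
    have hTx_ne : (T : H →L[ℂ] H) x ≠ 0 :=
      fun h => hx (by rw [← units_inv_apply_apply T x, h, map_zero])
    positivity
  have hX := qX_reApplyInnerSelf_mem_Icc V T hm.le hTV
  have hl : ‖(V : H →L[ℂ] H) x‖ ^ 2 / ‖(T : H →L[ℂ] H) x‖ ^ 2 ∈ Icc (m ^ 2) (M ^ 2) := by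
    rw [mem_Icc, le_div_iff₀ hTx, div_le_iff₀ hTx, ← qX_reApplyInnerSelf V T x]
    exact hX _
  rw [le_div_iff₀ hTx, ← RCLike.re_to_complex, ← reApplyInnerSelf_apply, qPersp_reApplyInnerSelf]
  refine hΦ.mul_norm_sq_le_reApplyInnerSelf_cfc (qX_isSelfAdjoint V T)
    ((spectrum_subset_Icc_of_forall_reApplyInnerSelf (qX_isSelfAdjoint V T) hX).trans hsub)
    (hsub hl) ?_
  rw [qX_reApplyInnerSelf, div_mul_cancel₀ _ hTx.ne']

theorem stmt4 (I : Set ℝ) (hIpos : I ⊆ Set.Ioi 0)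
    (Φ : ℝ → ℝ) (hΦ : ConvexOn ℝ I Φ)
    (T V : (H →L[ℂ] H)ˣ) (m M : ℝ) (hm : 0 < m) (hmM : m < M)
    (hsub : Set.Icc (m ^ 2) (M ^ 2) ⊆ interior I)
    (hTV : ∀ x : H, m * ‖(T : H →L[ℂ] H) x‖ ≤ ‖(V : H →L[ℂ] H) x‖ ∧ ‖(V : H →L[ℂ] H) x‖ ≤ M * ‖(T : H →L[ℂ] H) x‖)
    (x : H) (hx : x ≠ 0) :
    Φ (‖(V : H →L[ℂ] H) x‖ ^ 2 / ‖(T : H →L[ℂ] H) x‖ ^ 2) ≤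
      (inner ℂ ((qPersp Φ V T) x) x : ℂ).re / ‖(T : H →L[ℂ] H) x‖ ^ 2 :=
  stmt4_general I Φ hΦ T V m M hm hsub hTV x hx
end

section
/- Let Φ : I → ℝ be a convex function on an interval I of positive real numbers that is continuously differentiable on the interior of I, let T, V be bounded linear invertible operators on a complex Hilbert space H, and let 0 < m < M with [m², M²] contained in the interior of I and m‖Tx‖ ≤ ‖Vx‖ ≤ M‖Tx‖ for all x ∈ H. Then for every t in the interior of I, in the operator order: ⊙_Φ(V,T) ≤ Φ(t)|T|² + ⊙_{Φ'·ℓ}(V,T) − t·⊙_{Φ'}(V,T), where ℓ is the identity function, i.e. ⊙_{Φ'·ℓ}(V,T) = T* (Φ'(X)·X) T and ⊙_{Φ'}(V,T) = T* Φ'(X) T with X = |VT⁻¹|². -/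
/-!
The norm bounds say `m² ≤ X ≤ M²`, so the spectrum of `X` lies in the interior of `I`, where `Φ`
is differentiable. There convexity gives the tangent-line inequality
`Φ s ≤ Φ t + Φ' s * s - t * Φ' s` (the tangent at `s`, evaluated at `t`). The functional calculus
is monotone and linear in the function, so `Φ(X) ≤ Φ(t) + Φ'(X) X - t Φ'(X)`, and conjugation
`A ↦ T* A T` preserves the order.
-/

variable {H : Type*} [NormedAddCommGroup H] [InnerProductSpace ℂ H] [CompleteSpace H]

open RCLike InnerProductSpace

theorem ConvexOn.add_mul_sub_le_of_hasDerivAt {S : Set ℝ} {f : ℝ → ℝ} {f' x y : ℝ}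
    (hf : ConvexOn ℝ S f) (hx : x ∈ S) (hy : y ∈ S) (hf' : HasDerivAt f f' x) :
    f x + f' * (y - x) ≤ f y := by
  rcases lt_trichotomy x y with hxy | rfl | hxy
  · have h := hf.le_slope_of_hasDerivAt hx hy hxy hf'
    rw [slope_def_field, le_div_iff₀ (sub_pos.mpr hxy)] at h
    linarith
  · simp
  · have h := hf.slope_le_of_hasDerivAt hy hx hxy hf'
    rw [slope_def_field, div_le_iff₀ (sub_pos.mpr hxy)] at h
    linarith

namespace ContinuousLinearMap

theorem le_of_forall_re_inner_le {𝕜 E : Type*} [RCLike 𝕜] [NormedAddCommGroup E]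
    [InnerProductSpace 𝕜 E] [CompleteSpace E] {f g : E →L[𝕜] E} (hf : IsSelfAdjoint f)
    (hg : IsSelfAdjoint g) (h : ∀ x, re ⟪f x, x⟫_𝕜 ≤ re ⟪g x, x⟫_𝕜) : f ≤ g := by
  refine (le_def f g).mpr ⟨(hg.sub hf).isSymmetric, fun x => ?_⟩
  simpa [reApplyInnerSelf, inner_sub_left] using h x

theorem re_inner_algebraMap_apply {E : Type*} [NormedAddCommGroup E] [InnerProductSpace ℂ E]
    (r : ℝ) (x : E) : re ⟪algebraMap ℝ (E →L[ℂ] E) r x, x⟫_ℂ = r * ‖x‖ ^ 2 := by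
  rw [Algebra.algebraMap_eq_smul_one, smul_apply, one_apply_eq_self, real_smul_eq_coe_smul (K := ℂ),
    inner_smul_real_left, smul_re, inner_self_eq_norm_sq]

theorem re_inner_star_mul_self_apply {𝕜 E : Type*} [RCLike 𝕜] [NormedAddCommGroup E]
    [InnerProductSpace 𝕜 E] [CompleteSpace E] (B : E →L[𝕜] E) (x : E) :
    re ⟪(star B * B) x, x⟫_𝕜 = ‖B x‖ ^ 2 := by
  change re ⟪star B (B x), x⟫_𝕜 = _
  rw [star_eq_adjoint, adjoint_inner_left, inner_self_eq_norm_sq]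

theorem spectrum_star_mul_self_subset_Icc {B : H →L[ℂ] H} {m M : ℝ} (hm : 0 ≤ m)
    (hlow : ∀ x, m * ‖x‖ ≤ ‖B x‖) (hup : ∀ x, ‖B x‖ ≤ M * ‖x‖) :
    spectrum ℝ (star B * B) ⊆ Set.Icc (m ^ 2) (M ^ 2) := by
  have hsa : IsSelfAdjoint (star B * B) := .star_mul_self B
  have hlow' : algebraMap ℝ (H →L[ℂ] H) (m ^ 2) ≤ star B * B :=
    le_of_forall_re_inner_le (.algebraMap _ (.all _)) hsa fun x => by
      rw [re_inner_algebraMap_apply, re_inner_star_mul_self_apply, ← mul_pow]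
      exact pow_le_pow_left₀ (mul_nonneg hm (norm_nonneg x)) (hlow x) 2
  have hup' : star B * B ≤ algebraMap ℝ (H →L[ℂ] H) (M ^ 2) :=
    le_of_forall_re_inner_le hsa (.algebraMap _ (.all _)) fun x => by
      rw [re_inner_algebraMap_apply, re_inner_star_mul_self_apply, ← mul_pow]
      exact pow_le_pow_left₀ (norm_nonneg _) (hup x) 2
  exact fun s hs => ⟨(algebraMap_le_iff_le_spectrum hsa).mp hlow' s hs,
    (le_algebraMap_iff_spectrum_le hsa).mp hup' s hs⟩

end ContinuousLinearMap

section QuadraticPerspective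

variable (V T : (H →L[ℂ] H)ˣ)

theorem qX_eq_star_mul_self :
    qX V T = star ((V : H →L[ℂ] H) * ↑(T⁻¹)) * ((V : H →L[ℂ] H) * ↑(T⁻¹)) := by
  simp only [qX, star_mul, mul_assoc]

theorem isSelfAdjoint_qX : IsSelfAdjoint (qX V T) :=
  qX_eq_star_mul_self V T ▸ .star_mul_self _

theorem spectrum_qX_subset_Icc {m M : ℝ} (hm : 0 ≤ m)
    (hlow : ∀ x, m * ‖(T : H →L[ℂ] H) x‖ ≤ ‖(V : H →L[ℂ] H) x‖)
    (hup : ∀ x, ‖(V : H →L[ℂ] H) x‖ ≤ M * ‖(T : H →L[ℂ] H) x‖) :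
    spectrum ℝ (qX V T) ⊆ Set.Icc (m ^ 2) (M ^ 2) := by
  have hTT : ∀ y, (T : H →L[ℂ] H) ((↑(T⁻¹) : H →L[ℂ] H) y) = y := fun y =>
    congrArg (fun A : H →L[ℂ] H => A y) T.mul_inv
  rw [qX_eq_star_mul_self]
  refine ContinuousLinearMap.spectrum_star_mul_self_subset_Icc hm (fun y => ?_) (fun y => ?_)
  · have h := hlow ((↑(T⁻¹) : H →L[ℂ] H) y)
    rwa [hTT] at h
  · have h := hup ((↑(T⁻¹) : H →L[ℂ] H) y)
    rwa [hTT] at h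

variable {V T}

theorem qPersp_mono {f g : ℝ → ℝ} (hfg : ∀ s ∈ spectrum ℝ (qX V T), f s ≤ g s)
    (hf : ContinuousOn f (spectrum ℝ (qX V T))) (hg : ContinuousOn g (spectrum ℝ (qX V T))) :
    qPersp f V T ≤ qPersp g V T :=
  star_left_conjugate_le_conjugate (cfc_mono hfg hf hg) _

theorem qPersp_add {f g : ℝ → ℝ} (hf : ContinuousOn f (spectrum ℝ (qX V T)))
    (hg : ContinuousOn g (spectrum ℝ (qX V T))) :
    qPersp (fun s => f s + g s) V T = qPersp f V T + qPersp g V T := by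
  rw [qPersp, cfc_add (hf := hf) (hg := hg), mul_add, add_mul, qPersp, qPersp]

theorem qPersp_sub {f g : ℝ → ℝ} (hf : ContinuousOn f (spectrum ℝ (qX V T)))
    (hg : ContinuousOn g (spectrum ℝ (qX V T))) :
    qPersp (fun s => f s - g s) V T = qPersp f V T - qPersp g V T := by
  rw [qPersp, cfc_sub f g _ hf hg, mul_sub, sub_mul, qPersp, qPersp]

theorem qPersp_const_mul (c : ℝ) {f : ℝ → ℝ} (hf : ContinuousOn f (spectrum ℝ (qX V T))) :
    qPersp (fun s => c * f s) V T = c • qPersp f V T := by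
  rw [qPersp, cfc_const_mul c f _ hf, mul_smul_comm, smul_mul_assoc, qPersp]

theorem qPersp_const (c : ℝ) : qPersp (fun _ => c) V T = c • modSq T := by
  simp only [qPersp, modSq, cfc_const c _ (isSelfAdjoint_qX V T), Algebra.algebraMap_eq_smul_one,
    mul_smul_comm, smul_mul_assoc, mul_one]

end QuadraticPerspective

theorem stmt7_general (I : Set ℝ)
    (Φ Φ' : ℝ → ℝ) (hΦ : ConvexOn ℝ I Φ)
    (hΦ' : ∀ s ∈ interior I, HasDerivAt Φ (Φ' s) s)
    (hΦ'c : ContinuousOn Φ' (interior I))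
    (T V : (H →L[ℂ] H)ˣ) (m M : ℝ) (hm : 0 < m)
    (hsub : Set.Icc (m ^ 2) (M ^ 2) ⊆ interior I)
    (hTV : ∀ x : H, m * ‖(T : H →L[ℂ] H) x‖ ≤ ‖(V : H →L[ℂ] H) x‖ ∧ ‖(V : H →L[ℂ] H) x‖ ≤ M * ‖(T : H →L[ℂ] H) x‖)
    (t : ℝ) (ht : t ∈ interior I) :
    qPersp Φ V T ≤
      Φ t • modSq T + qPersp (fun s => Φ' s * s) V T - t • qPersp Φ' V T := by
  have hspec : spectrum ℝ (qX V T) ⊆ interior I :=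
    (spectrum_qX_subset_Icc V T hm.le (fun x => (hTV x).1) (fun x => (hTV x).2)).trans hsub
  have hΦcont : ContinuousOn Φ (spectrum ℝ (qX V T)) := fun s hs =>
    (hΦ' s (hspec hs)).continuousAt.continuousWithinAt
  have hΦ'cont : ContinuousOn Φ' (spectrum ℝ (qX V T)) := hΦ'c.mono hspec
  have hΦ'id : ContinuousOn (fun s => Φ' s * s) (spectrum ℝ (qX V T)) :=
    hΦ'cont.mul continuousOn_id
  have hleft : ContinuousOn (fun s => Φ t + Φ' s * s) (spectrum ℝ (qX V T)) :=
    continuousOn_const.add hΦ'id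
  have hright : ContinuousOn (fun s => t * Φ' s) (spectrum ℝ (qX V T)) :=
    continuousOn_const.mul hΦ'cont
  have htangent : ∀ s ∈ spectrum ℝ (qX V T), Φ s ≤ Φ t + Φ' s * s - t * Φ' s := fun s hs => by
    have := hΦ.add_mul_sub_le_of_hasDerivAt (interior_subset (hspec hs)) (interior_subset ht)
      (hΦ' s (hspec hs))
    linarith
  calc qPersp Φ V T ≤ qPersp (fun s => Φ t + Φ' s * s - t * Φ' s) V T :=
        qPersp_mono htangent hΦcont (hleft.sub hright)
    _ = Φ t • modSq T + qPersp (fun s => Φ' s * s) V T - t • qPersp Φ' V T := by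
      rw [qPersp_sub hleft hright, qPersp_add continuousOn_const hΦ'id,
        qPersp_const, qPersp_const_mul t hΦ'cont]

theorem stmt7 (I : Set ℝ) (hIpos : I ⊆ Set.Ioi 0)
    (Φ Φ' : ℝ → ℝ) (hΦ : ConvexOn ℝ I Φ)
    (hΦ' : ∀ s ∈ interior I, HasDerivAt Φ (Φ' s) s)
    (hΦ'c : ContinuousOn Φ' (interior I))
    (T V : (H →L[ℂ] H)ˣ) (m M : ℝ) (hm : 0 < m) (hmM : m < M)
    (hsub : Set.Icc (m ^ 2) (M ^ 2) ⊆ interior I)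
    (hTV : ∀ x : H, m * ‖(T : H →L[ℂ] H) x‖ ≤ ‖(V : H →L[ℂ] H) x‖ ∧ ‖(V : H →L[ℂ] H) x‖ ≤ M * ‖(T : H →L[ℂ] H) x‖)
    (t : ℝ) (ht : t ∈ interior I) :
    qPersp Φ V T ≤
      Φ t • modSq T + qPersp (fun s => Φ' s * s) V T - t • qPersp Φ' V T :=
  stmt7_general I Φ Φ' hΦ hΦ' hΦ'c T V m M hm hsub hTV t ht
end
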